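/- (Theorem 1, suboptimality relative to infinite horizon) Under Assumptions 1 and 2 with ρ > 0 and γ := C/(1−ρ) > 1, let V̄ > 0, M ≥ 1, and N > N_M. Then for every initial condition x₀ with V_{N,M}(x₀) ≤ V̄, the MPC value function is bounded by the infinite-horizon optimal cost as V_{N,M}(x₀) ≤ (1 + γ ρ_γ^{N−N₀}) · V_{∞,0}(x₀); combined with the closed-loop performance bound, Σ_{k=0}^{∞} ℓ(x(k), u(k)) ≤ V_{∞,0}(x₀)/α_{N,M} with α_{N,M} := ε_{N,M}/(1 + γρ_γ^{N−N₀}) ∈ (0, ε_{N,M}]. -/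

import Mathlib

/-!
Everything rests on one discrete estimate: if a nonnegative sequence `Y` (a cost to go) loses at
each step at least `min (γ ε) (Y j) / γ`, then it falls below `γ ε` within `N₀` steps (it drops by
`ε` per step before) and contracts by `ρ_γ = (γ - 1) / γ` per step afterwards.

For an optimal MPC input this holds because switching to `κ` at any time `j` with
`ℓ_min(x_j) ≤ ε` is a competitor costing at most `γ ℓ_min(x_j)` from `j` on. Hence the terminal
tail cost is at most `ρ_γ^(N-N₀) γ ℓ(x, u(0))`, so one more step of `κ` costs at most
`(1 - ε_{N,M}) ℓ(x, u(0))` by Assumption 2, and the shifted optimal input extended by `κ` gives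
`V_{N,M}(x⁺) + ε_{N,M} ℓ(x, u(0)) ≤ V_{N,M}(x)`, which telescopes along the closed loop.

For the comparison with `V_{∞,0}`, the tails of an arbitrary admissible infinite input cannot
satisfy the estimate at every step without leaving a time `j ≤ N` at which switching to `κ`
loses at most the factor `1 + γ ρ_γ^(N-N₀)`.
-/

open Finset Filter
open scoped ENNReal

noncomputable section

open scoped Classical

/-- State/input spaces are Euclidean spaces. -/
abbrev Vec (n : ℕ) := EuclideanSpace ℝ (Fin n)

/-- Open-loop state trajectory: `x(0) = x`, `x(k+1) = f(x(k), u(k))`. -/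
def traj {n m : ℕ} (f : Vec n → Vec m → Vec n) (x : Vec n) (u : ℕ → Vec m) : ℕ → Vec n
  | 0 => x
  | k + 1 => f (traj f x u k) (u k)

/-- Closed-loop state trajectory under the feedback `κ` (the map `φ_x(·, x)`). -/
def phiX {n m : ℕ} (f : Vec n → Vec m → Vec n) (κ : Vec n → Vec m) (x : Vec n) : ℕ → Vec n
  | 0 => x
  | k + 1 => f (phiX f κ x k) (κ (phiX f κ x k))

/-- `ℓ_min(x) := inf_{u ∈ U} ℓ(x, u)`. -/
def lmin {n m : ℕ} (ℓ : Vec n → Vec m → ℝ) (Uset : Set (Vec m)) (x : Vec n) : ℝ :=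
  sInf ((fun u => ℓ x u) '' Uset)

/-- Finite-tail cost `V_{f,M}(x)`: sum of the stage cost along the κ-closed loop if the
constraints are satisfied along the tail, and `+∞` otherwise (for `M = 0` it equals `0`). -/
def Vtail {n m : ℕ} (f : Vec n → Vec m → Vec n) (κ : Vec n → Vec m)
    (ℓ : Vec n → Vec m → ℝ) (Z : Set (Vec n × Vec m)) (M : ℕ) (x : Vec n) : ℝ≥0∞ :=
  if ∀ k < M, (phiX f κ x k, κ (phiX f κ x k)) ∈ Z then
    ENNReal.ofReal (∑ k ∈ Finset.range M, ℓ (phiX f κ x k) (κ (phiX f κ x k)))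
  else ⊤

/-- Feasibility of the input sequence `u` over horizon `N` from state `x`. -/
def Feasible {n m : ℕ} (f : Vec n → Vec m → Vec n) (Z : Set (Vec n × Vec m))
    (Uset : Set (Vec m)) (N : ℕ) (x : Vec n) (u : ℕ → Vec m) : Prop :=
  ∀ k < N, u k ∈ Uset ∧ (traj f x u k, u k) ∈ Z

/-- MPC open-loop cost `J_{N,M}` of the input sequence `u` from state `x`. -/
def Jcost {n m : ℕ} (f : Vec n → Vec m → Vec n) (κ : Vec n → Vec m)
    (ℓ : Vec n → Vec m → ℝ) (Z : Set (Vec n × Vec m)) (N M : ℕ) (x : Vec n)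
    (u : ℕ → Vec m) : ℝ≥0∞ :=
  ENNReal.ofReal (∑ k ∈ Finset.range N, ℓ (traj f x u k) (u k)) +
    Vtail f κ ℓ Z M (traj f x u N)

/-- MPC value function `V_{N,M}(x)` (equal to `+∞` if the problem is infeasible). -/
def Vmpc {n m : ℕ} (f : Vec n → Vec m → Vec n) (κ : Vec n → Vec m)
    (ℓ : Vec n → Vec m → ℝ) (Z : Set (Vec n × Vec m)) (Uset : Set (Vec m))
    (N M : ℕ) (x : Vec n) : ℝ≥0∞ :=
  ⨅ (u : ℕ → Vec m) (_ : Feasible f Z Uset N x u), Jcost f κ ℓ Z N M x u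

/-- `u` is a minimizing (optimal) input sequence for `V_{N,M}(x)`. -/
def IsMinimizer {n m : ℕ} (f : Vec n → Vec m → Vec n) (κ : Vec n → Vec m)
    (ℓ : Vec n → Vec m → ℝ) (Z : Set (Vec n × Vec m)) (Uset : Set (Vec m))
    (N M : ℕ) (x : Vec n) (u : ℕ → Vec m) : Prop :=
  Feasible f Z Uset N x u ∧ Vmpc f κ ℓ Z Uset N M x = Jcost f κ ℓ Z N M x u

/-- Infinite-horizon optimal cost `V_{∞,0}(x)`. -/
def Vinf {n m : ℕ} (f : Vec n → Vec m → Vec n) (ℓ : Vec n → Vec m → ℝ)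
    (Z : Set (Vec n × Vec m)) (Uset : Set (Vec m)) (x : Vec n) : ℝ≥0∞ :=
  ⨅ (u : ℕ → Vec m) (_ : ∀ k, u k ∈ Uset ∧ (traj f x u k, u k) ∈ Z),
    ∑' k : ℕ, ENNReal.ofReal (ℓ (traj f x u k) (u k))

/-- Assumption 2 (locally stabilizing controller): exponential decay of the stage
cost along the κ-closed loop and constraint satisfaction, locally (`ℓ_min(x) ≤ ε`). -/
def Assumption2 {n m : ℕ} (f : Vec n → Vec m → Vec n) (κ : Vec n → Vec m)
    (ℓ : Vec n → Vec m → ℝ) (Z : Set (Vec n × Vec m)) (Uset : Set (Vec m))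
    (ρ C ε : ℝ) : Prop :=
  ρ ∈ Set.Ico (0 : ℝ) 1 ∧ 1 ≤ C ∧ 0 < ε ∧
    ∀ x : Vec n, lmin ℓ Uset x ≤ ε → ∀ k : ℕ,
      ℓ (phiX f κ x k) (κ (phiX f κ x k)) ≤ C * ρ ^ k * lmin ℓ Uset x ∧
      (phiX f κ x k, κ (phiX f κ x k)) ∈ Z

/-- A class-`K∞` function: continuous, strictly increasing and unbounded on `[0,∞)`
with `α(0) = 0`. -/
def IsKInfty (α : ℝ → ℝ) : Prop :=
  ContinuousOn α (Set.Ici 0) ∧ StrictMonoOn α (Set.Ici 0) ∧ α 0 = 0 ∧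
    Tendsto α atTop atTop

section Estimates

variable {γ ε V : ℝ} {N₀ N : ℕ}

lemma le_pow_mul_min_of_min_le_sub (hγ : 1 < γ) (hε : 0 < ε) (hV : V ≤ (N₀ + γ) * ε)
    (hN : N₀ ≤ N) {Y : ℕ → ℝ} (hY0 : Y 0 ≤ V) (hY : ∀ j ≤ N, 0 ≤ Y j)
    (hstep : ∀ j < N, min (γ * ε) (Y j) ≤ γ * (Y j - Y (j + 1))) :
    Y N ≤ ((γ - 1) / γ) ^ (N - N₀) * min (γ * ε) (Y 0) := by
  have hγ0 : 0 < γ := by linarith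
  have hρ : 0 ≤ (γ - 1) / γ := div_nonneg (by linarith) hγ0.le
  have hanti : ∀ i k, i + k ≤ N → Y (i + k) ≤ Y i := by
    intro i k hk
    induction k with
    | zero => rfl
    | succ k ih =>
      have : 0 ≤ min (γ * ε) (Y (i + k)) := le_min (by positivity) (hY _ (by omega))
      have := hstep (i + k) (by omega)
      rw [← add_assoc]
      nlinarith [ih (by omega)]
  have hreach : ∀ j ≤ N₀, Y j ≤ max (γ * ε) (V - j * ε) := by
    intro j hj
    induction j with
    | zero => simpa using Or.inr hY0
    | succ j ih =>
      rcases le_or_gt (Y j) (γ * ε) with hlow | hhigh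
      · exact le_max_of_le_left ((hanti j 1 (by omega)).trans hlow)
      · have hYj := (le_max_iff.mp (ih (by omega))).resolve_left (not_le.mpr hhigh)
        have hdrop := hstep j (by omega)
        rw [min_eq_left hhigh.le] at hdrop
        have : ε ≤ Y j - Y (j + 1) := le_of_mul_le_mul_left hdrop hγ0
        refine le_max_of_le_right ?_
        push_cast
        linarith
  have hN₀ : Y N₀ ≤ γ * ε := (hreach N₀ le_rfl).trans (max_le le_rfl (by linarith))
  have hgeom : ∀ i, N₀ + i ≤ N → Y (N₀ + i) ≤ ((γ - 1) / γ) ^ i * Y N₀ := by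
    intro i hi
    induction i with
    | zero => simp
    | succ i ih =>
      have hstep' := hstep (N₀ + i) (by omega)
      rw [min_eq_right ((hanti N₀ i (by omega)).trans hN₀)] at hstep'
      have hcontract : Y (N₀ + i + 1) ≤ (γ - 1) / γ * Y (N₀ + i) := by
        rw [div_mul_eq_mul_div, le_div_iff₀ hγ0]
        linarith
      calc Y (N₀ + (i + 1)) ≤ (γ - 1) / γ * Y (N₀ + i) := hcontract
        _ ≤ (γ - 1) / γ * (((γ - 1) / γ) ^ i * Y N₀) := by
          gcongr
          exact ih (by omega)
        _ = ((γ - 1) / γ) ^ (i + 1) * Y N₀ := by ring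
  calc Y N = Y (N₀ + (N - N₀)) := by rw [Nat.add_sub_cancel' hN]
    _ ≤ ((γ - 1) / γ) ^ (N - N₀) * Y N₀ := hgeom _ (by omega)
    _ ≤ ((γ - 1) / γ) ^ (N - N₀) * min (γ * ε) (Y 0) := by
      gcongr
      exact le_min hN₀ (by simpa using hanti 0 N₀ (by omega))

/-- If no time qualified, the tails `∑' g - ∑_{k<j} g k` would satisfy the hypotheses of
`le_pow_mul_min_of_min_le_sub`, and then `j = N` would qualify. -/
lemma exists_switch_time (hγ : 1 < γ) (hε : 0 < ε) (hV : V ≤ (N₀ + γ) * ε) (hN : N₀ ≤ N)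
    (hc : ((γ - 1) / γ) ^ (N - N₀) * min (γ * ε) V < ε) {g : ℕ → ℝ} (hg : ∀ k, 0 ≤ g k)
    (hs : Summable g) (hS : ∑' k, g k ≤ V) :
    ∃ j ≤ N, g j ≤ ε ∧
      ∑ k ∈ range j, g k + γ * g j ≤ (1 + γ * ((γ - 1) / γ) ^ (N - N₀)) * ∑' k, g k := by
  set c := ((γ - 1) / γ) ^ (N - N₀)
  set S := ∑' k, g k
  have hc0 : 0 ≤ c := pow_nonneg (div_nonneg (by linarith) (by linarith)) _
  have hS0 : 0 ≤ S := tsum_nonneg hg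
  set T : ℕ → ℝ := fun j => S - ∑ k ∈ range j, g k
  have hT : ∀ j, 0 ≤ T j := fun j => sub_nonneg.mpr (hs.sum_le_tsum _ fun k _ => hg k)
  have hTsucc : ∀ j, T j - T (j + 1) = g j := fun j => by
    simp only [T, Finset.sum_range_succ]; ring
  by_contra! hnone
  have hstep : ∀ j < N, min (γ * ε) (T j) ≤ γ * (T j - T (j + 1)) := by
    intro j hj
    rw [hTsucc]
    by_cases hgj : g j ≤ ε
    · have := hnone j hj.le hgj
      have : 0 ≤ γ * c * S := by positivity
      exact (min_le_right _ _).trans (by simp only [T]; linarith)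
    · exact (min_le_left _ _).trans (by gcongr; linarith)
  have hT0 : T 0 = S := by simp [T]
  have hTN := le_pow_mul_min_of_min_le_sub hγ hε hV hN (hT0.trans_le hS) (fun j _ => hT j) hstep
  rw [hT0] at hTN
  have hgN : g N ≤ T N := by linarith [hTsucc N, hT (N + 1)]
  have hTε : T N < ε :=
    hTN.trans_lt ((mul_le_mul_of_nonneg_left (min_le_min le_rfl hS) hc0).trans_lt hc)
  have hbad := hnone N le_rfl (by linarith)
  have hγg : γ * g N ≤ γ * (c * S) := by
    gcongr
    exact hgN.trans (hTN.trans (by gcongr; exact min_le_right _ _))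
  have hprefix : ∑ k ∈ range N, g k = S - T N := by simp only [T]; ring
  linarith [hT N]

end Estimates

lemma pow_mul_lt_one_of_log_lt {γ A : ℝ} {k : ℕ} (hγ : 1 < γ)
    (h : Real.log A < k * (Real.log γ - Real.log (γ - 1))) : ((γ - 1) / γ) ^ k * A < 1 := by
  have hρ : 0 < (γ - 1) / γ := div_pos (by linarith) (by linarith)
  rcases le_or_gt A 0 with hA | hA
  · exact (mul_nonpos_of_nonneg_of_nonpos (pow_nonneg hρ.le k) hA).trans_lt one_pos
  · rw [← Real.log_neg_iff (by positivity), Real.log_mul (by positivity) hA.ne', Real.log_pow,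
      Real.log_div (by linarith) (by linarith)]
    linarith

lemma horizon_bounds {ρ C ε Vbar γ γlow NM : ℝ} {N₀ M N : ℕ} (hε : 0 < ε) (hγ1 : 1 < γ)
    (hγlow : γlow = min γ (Vbar / ε)) (hN₀ : N₀ = ⌈max 0 ((Vbar - γ * ε) / ε)⌉₊)
    (hNM : NM = N₀ + max (Real.log γlow)
        (max (Real.log (C ^ 2 * ρ ^ M / (1 - ρ ^ M))) 0) /
        (Real.log γ - Real.log (γ - 1)))
    (hN : NM < N) :
    N₀ < N ∧ Vbar ≤ (N₀ + γ) * ε ∧ ((γ - 1) / γ) ^ (N - N₀) * min (γ * ε) Vbar < ε ∧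
      0 < 1 - C ^ 2 * ((γ - 1) / γ) ^ (N - N₀) * ρ ^ M / (1 - ρ ^ M) := by
  set D := max (Real.log γlow) (max (Real.log (C ^ 2 * ρ ^ M / (1 - ρ ^ M))) 0)
  have hL : 0 < Real.log γ - Real.log (γ - 1) :=
    sub_pos.mpr (Real.log_lt_log (by linarith) (by linarith))
  have hD : 0 ≤ D := (le_max_right _ _).trans (le_max_right _ _)
  have hN₀N : N₀ < N := by
    have : (N₀ : ℝ) ≤ NM := by rw [hNM]; exact le_add_of_nonneg_right (div_nonneg hD hL.le)
    exact_mod_cast this.trans_lt hN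
  have hDlt : D < ((N - N₀ : ℕ) : ℝ) * (Real.log γ - Real.log (γ - 1)) := by
    rw [Nat.cast_sub hN₀N.le, ← div_lt_iff₀ hL]
    linarith
  refine ⟨hN₀N, ?_, ?_, ?_⟩
  · have : (Vbar - γ * ε) / ε ≤ N₀ := by
      rw [hN₀]; exact (le_max_right _ _).trans (Nat.le_ceil _)
    rw [div_le_iff₀ hε] at this
    linarith
  · have h := pow_mul_lt_one_of_log_lt hγ1 ((le_max_left _ _).trans_lt hDlt)
    rw [hγlow] at h
    calc ((γ - 1) / γ) ^ (N - N₀) * min (γ * ε) Vbar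
        = ((γ - 1) / γ) ^ (N - N₀) * min γ (Vbar / ε) * ε := by
          rw [mul_assoc, min_mul_of_nonneg _ _ hε.le, div_mul_cancel₀ _ hε.ne']
      _ < 1 * ε := by gcongr
      _ = ε := one_mul ε
  · have h := pow_mul_lt_one_of_log_lt (A := C ^ 2 * ρ ^ M / (1 - ρ ^ M)) hγ1
      (((le_max_left _ _).trans (le_max_right _ _)).trans_lt hDlt)
    have : C ^ 2 * ((γ - 1) / γ) ^ (N - N₀) * ρ ^ M / (1 - ρ ^ M) =
        ((γ - 1) / γ) ^ (N - N₀) * (C ^ 2 * ρ ^ M / (1 - ρ ^ M)) := by ring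
    linarith

lemma tsum_le_of_succ_add_le {a b : ℕ → ℝ≥0∞} (h : ∀ t, a (t + 1) + b t ≤ a t) :
    ∑' t, b t ≤ a 0 := by
  have hpartial : ∀ T, ∑ t ∈ range T, b t + a T ≤ a 0 := by
    intro T
    induction T with
    | zero => simp
    | succ T ih =>
      rw [Finset.sum_range_succ, add_assoc, add_comm (b T)]
      exact (add_le_add_right (h T) _).trans ih
  rw [ENNReal.tsum_eq_iSup_nat]
  exact iSup_le fun T => le_self_add.trans (hpartial T)

lemma le_div_ofReal_div {a b : ℝ} (ha : 0 < a) (hb : 0 < b) {s v w : ℝ≥0∞}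
    (hs : ENNReal.ofReal a * s ≤ v) (hv : v ≤ ENNReal.ofReal b * w) :
    s ≤ w / ENNReal.ofReal (a / b) := by
  have hb0 : ENNReal.ofReal b ≠ 0 := (ENNReal.ofReal_pos.mpr hb).ne'
  rw [ENNReal.le_div_iff_mul_le (Or.inl (ENNReal.ofReal_pos.mpr (div_pos ha hb)).ne')
    (Or.inl ENNReal.ofReal_ne_top), ← ENNReal.mul_le_mul_iff_right hb0 ENNReal.ofReal_ne_top,
    mul_left_comm, ← ENNReal.ofReal_mul hb.le, mul_div_cancel₀ _ hb.ne']
  exact (mul_comm s _).trans_le (hs.trans hv)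

section Trajectories

variable {n m : ℕ} (f : Vec n → Vec m → Vec n) (κ : Vec n → Vec m) (ℓ : Vec n → Vec m → ℝ)

def openLoopCost (N : ℕ) (x : Vec n) (u : ℕ → Vec m) : ℝ :=
  ∑ k ∈ range N, ℓ (traj f x u k) (u k)

def closedLoopCost (K : ℕ) (y : Vec n) : ℝ :=
  ∑ i ∈ range K, ℓ (phiX f κ y i) (κ (phiX f κ y i))

def switchInput (x : Vec n) (u : ℕ → Vec m) (j : ℕ) : ℕ → Vec m :=
  fun k => if k < j then u k else κ (phiX f κ (traj f x u j) (k - j))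

lemma phiX_add (x : Vec n) (i j : ℕ) : phiX f κ (phiX f κ x i) j = phiX f κ x (i + j) := by
  induction j with
  | zero => rfl
  | succ j ih => rw [← Nat.add_assoc, phiX, phiX, ih]

lemma traj_shift (x : Vec n) (u : ℕ → Vec m) (k : ℕ) :
    traj f (f x (u 0)) (fun i => u (i + 1)) k = traj f x u (k + 1) := by
  induction k with
  | zero => rfl
  | succ k ih => simp only [traj, ih]

lemma traj_switchInput_of_le (x : Vec n) (u : ℕ → Vec m) {j k : ℕ} (hk : k ≤ j) :
    traj f x (switchInput f κ x u j) k = traj f x u k := by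
  induction k with
  | zero => rfl
  | succ k ih => simp only [traj, ih (by omega), switchInput, if_pos (show k < j by omega)]

lemma traj_switchInput_add (x : Vec n) (u : ℕ → Vec m) (j i : ℕ) :
    traj f x (switchInput f κ x u j) (j + i) = phiX f κ (traj f x u j) i := by
  induction i with
  | zero => exact traj_switchInput_of_le f κ x u le_rfl
  | succ i ih =>
    rw [← Nat.add_assoc, traj, phiX, ih, switchInput, if_neg (by omega), Nat.add_sub_cancel_left]

lemma openLoopCost_switchInput (x : Vec n) (u : ℕ → Vec m) {j N : ℕ} (hj : j ≤ N) :
    openLoopCost f ℓ N x (switchInput f κ x u j) =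
      openLoopCost f ℓ j x u + closedLoopCost f κ ℓ (N - j) (traj f x u j) := by
  obtain ⟨i, rfl⟩ := Nat.exists_eq_add_of_le hj
  rw [openLoopCost, Finset.sum_range_add, Nat.add_sub_cancel_left, openLoopCost, closedLoopCost]
  congr 1
  · refine Finset.sum_congr rfl fun k hk => ?_
    have hk : k < j := Finset.mem_range.mp hk
    rw [traj_switchInput_of_le f κ x u hk.le, switchInput, if_pos hk]
  · refine Finset.sum_congr rfl fun k _ => ?_
    rw [traj_switchInput_add, switchInput, if_neg (by omega), Nat.add_sub_cancel_left]

lemma closedLoopCost_add (K L : ℕ) (y : Vec n) :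
    closedLoopCost f κ ℓ (K + L) y =
      closedLoopCost f κ ℓ K y + closedLoopCost f κ ℓ L (phiX f κ y K) := by
  simp only [closedLoopCost, Finset.sum_range_add, phiX_add]

end Trajectories

section MPC

variable {n m : ℕ} {f : Vec n → Vec m → Vec n} {κ : Vec n → Vec m} {ℓ : Vec n → Vec m → ℝ}
  {Z : Set (Vec n × Vec m)} {Uset : Set (Vec m)} {ρ C ε : ℝ}

lemma Assumption2.gain_pos (hA2 : Assumption2 f κ ℓ Z Uset ρ C ε) : 0 < C / (1 - ρ) :=
  div_pos (by linarith [hA2.2.1]) (by linarith [hA2.1.2])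

lemma openLoopCost_nonneg (hℓ0 : ∀ x u, 0 ≤ ℓ x u) (N : ℕ) (x : Vec n) (u : ℕ → Vec m) :
    0 ≤ openLoopCost f ℓ N x u :=
  Finset.sum_nonneg fun _ _ => hℓ0 _ _

lemma closedLoopCost_nonneg (hℓ0 : ∀ x u, 0 ≤ ℓ x u) (K : ℕ) (y : Vec n) :
    0 ≤ closedLoopCost f κ ℓ K y :=
  Finset.sum_nonneg fun _ _ => hℓ0 _ _

lemma lmin_le (hℓ0 : ∀ x u, 0 ≤ ℓ x u) (x : Vec n) {u : Vec m} (hu : u ∈ Uset) :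
    lmin ℓ Uset x ≤ ℓ x u :=
  csInf_le ⟨0, by rintro _ ⟨w, -, rfl⟩; exact hℓ0 x w⟩ ⟨u, hu, rfl⟩

lemma lmin_nonneg (hℓ0 : ∀ x u, 0 ≤ ℓ x u) (hU : Uset.Nonempty) (x : Vec n) :
    0 ≤ lmin ℓ Uset x :=
  le_csInf (hU.image _) (by rintro _ ⟨w, -, rfl⟩; exact hℓ0 x w)

lemma Vtail_eq_ofReal {M : ℕ} {y : Vec n}
    (hZ : ∀ k < M, (phiX f κ y k, κ (phiX f κ y k)) ∈ Z) :
    Vtail f κ ℓ Z M y = ENNReal.ofReal (closedLoopCost f κ ℓ M y) := by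
  rw [Vtail, if_pos hZ, closedLoopCost]

lemma Jcost_eq_ofReal_of_ne_top (hℓ0 : ∀ x u, 0 ≤ ℓ x u) {N M : ℕ} {x : Vec n}
    {u : ℕ → Vec m} (h : Jcost f κ ℓ Z N M x u ≠ ⊤) :
    Jcost f κ ℓ Z N M x u = ENNReal.ofReal
      (openLoopCost f ℓ N x u + closedLoopCost f κ ℓ M (traj f x u N)) := by
  have hZ : ∀ k < M, (phiX f κ (traj f x u N) k, κ (phiX f κ (traj f x u N) k)) ∈ Z := by
    by_contra hZ
    exact h (by rw [Jcost, Vtail, if_neg hZ, add_top])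
  rw [Jcost, Vtail_eq_ofReal hZ, ENNReal.ofReal_add (openLoopCost_nonneg hℓ0 _ _ _)
    (closedLoopCost_nonneg hℓ0 _ _), openLoopCost]

lemma Vmpc_le_switch (hℓ0 : ∀ x u, 0 ≤ ℓ x u) (hκU : ∀ x, κ x ∈ Uset)
    (hA2 : Assumption2 f κ ℓ Z Uset ρ C ε) {N M j : ℕ} (hj : j ≤ N) {x : Vec n}
    {u : ℕ → Vec m} (hfeas : ∀ k < j, u k ∈ Uset ∧ (traj f x u k, u k) ∈ Z)
    (hε : lmin ℓ Uset (traj f x u j) ≤ ε) :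
    Vmpc f κ ℓ Z Uset N M x ≤ ENNReal.ofReal
      (openLoopCost f ℓ j x u + closedLoopCost f κ ℓ (N - j + M) (traj f x u j)) := by
  set y := traj f x u j
  have hloop := hA2.2.2.2 y hε
  have hv : Feasible f Z Uset N x (switchInput f κ x u j) := by
    intro k hk
    by_cases hkj : k < j
    · rw [traj_switchInput_of_le f κ x u hkj.le, switchInput, if_pos hkj]
      exact hfeas k hkj
    · obtain ⟨i, rfl⟩ := Nat.exists_eq_add_of_le (not_lt.mp hkj)
      rw [traj_switchInput_add, switchInput, if_neg hkj, Nat.add_sub_cancel_left]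
      exact ⟨hκU _, (hloop i).2⟩
  have hend : traj f x (switchInput f κ x u j) N = phiX f κ y (N - j) := by
    rw [← traj_switchInput_add f κ x u j (N - j), Nat.add_sub_cancel' hj]
  have htail : Vtail f κ ℓ Z M (traj f x (switchInput f κ x u j) N) =
      ENNReal.ofReal (closedLoopCost f κ ℓ M (phiX f κ y (N - j))) := by
    rw [hend]
    exact Vtail_eq_ofReal fun k _ => by rw [phiX_add]; exact (hloop _).2
  calc Vmpc f κ ℓ Z Uset N M x ≤ Jcost f κ ℓ Z N M x (switchInput f κ x u j) :=
        iInf₂_le _ hv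
    _ = _ := by
      rw [Jcost, htail, ← ENNReal.ofReal_add (Finset.sum_nonneg fun _ _ => hℓ0 _ _)
        (closedLoopCost_nonneg hℓ0 _ _), ← openLoopCost, openLoopCost_switchInput f κ ℓ x u hj,
        add_assoc, ← closedLoopCost_add]

lemma openLoopCost_shift (N : ℕ) (x : Vec n) (u : ℕ → Vec m) :
    openLoopCost f ℓ N (f x (u 0)) (fun k => u (k + 1)) =
      openLoopCost f ℓ (N + 1) x u - ℓ x (u 0) := by
  simp only [openLoopCost, Finset.sum_range_succ' _ N, traj_shift, traj]
  ring

lemma closedLoopCost_le (hℓ0 : ∀ x u, 0 ≤ ℓ x u) (hκU : ∀ x, κ x ∈ Uset)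
    (hA2 : Assumption2 f κ ℓ Z Uset ρ C ε) {y : Vec n} (hy : lmin ℓ Uset y ≤ ε) (K : ℕ) :
    closedLoopCost f κ ℓ K y ≤ C / (1 - ρ) * lmin ℓ Uset y := by
  obtain ⟨⟨hρ0, hρ1⟩, hC, -, hloop⟩ := hA2
  have hL := lmin_nonneg hℓ0 ⟨κ y, hκU y⟩ y
  calc closedLoopCost f κ ℓ K y ≤ ∑ i ∈ range K, C * lmin ℓ Uset y * ρ ^ i :=
        Finset.sum_le_sum fun i _ => (hloop y hy i).1.trans_eq (by ring)
    _ ≤ C * lmin ℓ Uset y * (1 / (1 - ρ)) := by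
        rw [← Finset.mul_sum]
        gcongr
        have h := geom_sum_Ico_le_of_lt_one (m := 0) (n := K) hρ0 hρ1
        rwa [← Finset.range_eq_Ico, pow_zero] at h
    _ = C / (1 - ρ) * lmin ℓ Uset y := by ring

lemma Vmpc_le_openLoopCost_add (hℓ0 : ∀ x u, 0 ≤ ℓ x u) (hκU : ∀ x, κ x ∈ Uset)
    (hA2 : Assumption2 f κ ℓ Z Uset ρ C ε) {N M j : ℕ} (hj : j ≤ N) {x : Vec n}
    {u : ℕ → Vec m} (hfeas : ∀ k < j, u k ∈ Uset ∧ (traj f x u k, u k) ∈ Z)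
    (hε : lmin ℓ Uset (traj f x u j) ≤ ε) :
    Vmpc f κ ℓ Z Uset N M x ≤
      ENNReal.ofReal (openLoopCost f ℓ j x u + C / (1 - ρ) * lmin ℓ Uset (traj f x u j)) :=
  (Vmpc_le_switch hℓ0 hκU hA2 hj hfeas hε).trans <| ENNReal.ofReal_le_ofReal <|
    by gcongr; exact closedLoopCost_le hℓ0 hκU hA2 hε _

/-- Candidate: the shifted input, followed by one more step of `κ`. -/
lemma Vmpc_succ_le (hℓ0 : ∀ x u, 0 ≤ ℓ x u) (hκU : ∀ x, κ x ∈ Uset)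
    (hA2 : Assumption2 f κ ℓ Z Uset ρ C ε) {N M : ℕ} (hN : 1 ≤ N) {x : Vec n}
    {u : ℕ → Vec m} (hfeas : Feasible f Z Uset N x u)
    (hε : lmin ℓ Uset (traj f x u N) ≤ ε) :
    Vmpc f κ ℓ Z Uset N M (f x (u 0)) ≤ ENNReal.ofReal (openLoopCost f ℓ N x u - ℓ x (u 0) +
      closedLoopCost f κ ℓ (M + 1) (traj f x u N)) := by
  obtain ⟨N, rfl⟩ := Nat.exists_eq_add_of_le' hN
  have hfeas' : ∀ k < N, u (k + 1) ∈ Uset ∧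
      (traj f (f x (u 0)) (fun i => u (i + 1)) k, u (k + 1)) ∈ Z := fun k hk => by
    rw [traj_shift]; exact hfeas (k + 1) (by omega)
  have h := Vmpc_le_switch (M := M) hℓ0 hκU hA2 (Nat.le_succ N) hfeas'
    (by rwa [traj_shift])
  rwa [traj_shift, openLoopCost_shift, show N + 1 - N + M = M + 1 by omega] at h

lemma stageCost_phiX_mul_le (hℓ0 : ∀ x u, 0 ≤ ℓ x u) (hκU : ∀ x, κ x ∈ Uset)
    (hA2 : Assumption2 f κ ℓ Z Uset ρ C ε) {M : ℕ} {y : Vec n}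
    (hW : closedLoopCost f κ ℓ M y ≤ ε) :
    ℓ (phiX f κ y M) (κ (phiX f κ y M)) * (1 - ρ ^ M) ≤
      C * ρ ^ M * (1 - ρ) * closedLoopCost f κ ℓ M y := by
  obtain ⟨⟨hρ0, hρ1⟩, hC, -, hloop⟩ := hA2
  set E := ℓ (phiX f κ y M) (κ (phiX f κ y M))
  have hterm : ∀ i ∈ range M, ρ ^ i * E ≤ C * ρ ^ M * ℓ (phiX f κ y i) (κ (phiX f κ y i)) := by
    intro i hi
    have hiM : i < M := Finset.mem_range.mp hi
    have hle : ℓ (phiX f κ y i) (κ (phiX f κ y i)) ≤ closedLoopCost f κ ℓ M y :=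
      Finset.single_le_sum (f := fun i => ℓ (phiX f κ y i) (κ (phiX f κ y i)))
        (fun _ _ => hℓ0 _ _) hi
    have hmin := lmin_le hℓ0 (phiX f κ y i) (hκU (phiX f κ y i))
    have hdecay := (hloop _ (hmin.trans (hle.trans hW)) (M - i)).1
    rw [phiX_add, Nat.add_sub_cancel' hiM.le] at hdecay
    calc ρ ^ i * E ≤ ρ ^ i * (C * ρ ^ (M - i) * ℓ (phiX f κ y i) (κ (phiX f κ y i))) := by
          gcongr
          exact hdecay.trans (by gcongr)
      _ = C * (ρ ^ i * ρ ^ (M - i)) * ℓ (phiX f κ y i) (κ (phiX f κ y i)) := by ring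
      _ = C * ρ ^ M * ℓ (phiX f κ y i) (κ (phiX f κ y i)) := by
          rw [← pow_add, Nat.add_sub_cancel' hiM.le]
  calc E * (1 - ρ ^ M) = (∑ i ∈ range M, ρ ^ i * E) * (1 - ρ) := by
        rw [← Finset.sum_mul]; linear_combination E * geom_sum_mul ρ M
    _ ≤ C * ρ ^ M * closedLoopCost f κ ℓ M y * (1 - ρ) := by
        rw [closedLoopCost, Finset.mul_sum]
        exact mul_le_mul_of_nonneg_right (Finset.sum_le_sum hterm) (by linarith)
    _ = C * ρ ^ M * (1 - ρ) * closedLoopCost f κ ℓ M y := by ring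

variable (f κ ℓ) in
def costToGo (N M : ℕ) (x : Vec n) (u : ℕ → Vec m) (j : ℕ) : ℝ :=
  ∑ k ∈ Finset.Ico j N, ℓ (traj f x u k) (u k) + closedLoopCost f κ ℓ M (traj f x u N)

lemma costToGo_nonneg (hℓ0 : ∀ x u, 0 ≤ ℓ x u) (N M : ℕ) (x : Vec n) (u : ℕ → Vec m)
    (j : ℕ) : 0 ≤ costToGo f κ ℓ N M x u j :=
  add_nonneg (Finset.sum_nonneg fun _ _ => hℓ0 _ _) (closedLoopCost_nonneg hℓ0 _ _)

lemma openLoopCost_add_costToGo {N j : ℕ} (hj : j ≤ N) (M : ℕ) (x : Vec n) (u : ℕ → Vec m) :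
    openLoopCost f ℓ j x u + costToGo f κ ℓ N M x u j = costToGo f κ ℓ N M x u 0 := by
  rw [costToGo, costToGo, ← add_assoc, openLoopCost, Finset.sum_range_add_sum_Ico _ hj,
    Finset.range_eq_Ico]

lemma costToGo_succ {N j : ℕ} (hj : j < N) (M : ℕ) (x : Vec n) (u : ℕ → Vec m) :
    costToGo f κ ℓ N M x u j = ℓ (traj f x u j) (u j) + costToGo f κ ℓ N M x u (j + 1) := by
  rw [costToGo, costToGo, Finset.sum_eq_sum_Ico_succ_bot hj, add_assoc]

lemma costToGo_self (N M : ℕ) (x : Vec n) (u : ℕ → Vec m) :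
    costToGo f κ ℓ N M x u N = closedLoopCost f κ ℓ M (traj f x u N) := by
  rw [costToGo, Finset.Ico_self, Finset.sum_empty, zero_add]

lemma Vmpc_eq_costToGo_of_isMinimizer (hℓ0 : ∀ x u, 0 ≤ ℓ x u) {N M : ℕ} {x : Vec n}
    {u : ℕ → Vec m} (hu : IsMinimizer f κ ℓ Z Uset N M x u)
    (hfin : Vmpc f κ ℓ Z Uset N M x ≠ ⊤) :
    Vmpc f κ ℓ Z Uset N M x = ENNReal.ofReal (costToGo f κ ℓ N M x u 0) := by
  rw [hu.2] at hfin ⊢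
  rw [Jcost_eq_ofReal_of_ne_top hℓ0 hfin, ← costToGo_self, openLoopCost_add_costToGo le_rfl]

lemma costToGo_le_of_isMinimizer (hℓ0 : ∀ x u, 0 ≤ ℓ x u) (hκU : ∀ x, κ x ∈ Uset)
    (hA2 : Assumption2 f κ ℓ Z Uset ρ C ε) {N M j : ℕ} {x : Vec n} {u : ℕ → Vec m}
    (hu : IsMinimizer f κ ℓ Z Uset N M x u) (hfin : Vmpc f κ ℓ Z Uset N M x ≠ ⊤) (hj : j ≤ N)
    (hε : lmin ℓ Uset (traj f x u j) ≤ ε) :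
    costToGo f κ ℓ N M x u j ≤ C / (1 - ρ) * lmin ℓ Uset (traj f x u j) := by
  have h := Vmpc_le_openLoopCost_add (M := M) hℓ0 hκU hA2 hj (fun k hk => hu.1 k (by omega)) hε
  rw [Vmpc_eq_costToGo_of_isMinimizer hℓ0 hu hfin, ← openLoopCost_add_costToGo hj,
    ENNReal.ofReal_le_ofReal_iff (add_nonneg (openLoopCost_nonneg hℓ0 _ _ _)
      (mul_nonneg hA2.gain_pos.le (lmin_nonneg hℓ0 ⟨κ x, hκU x⟩ _)))] at h
  linarith

lemma min_le_mul_stageCost_of_isMinimizer (hℓ0 : ∀ x u, 0 ≤ ℓ x u) (hκU : ∀ x, κ x ∈ Uset)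
    (hA2 : Assumption2 f κ ℓ Z Uset ρ C ε) {N M j : ℕ} {x : Vec n} {u : ℕ → Vec m}
    (hu : IsMinimizer f κ ℓ Z Uset N M x u) (hfin : Vmpc f κ ℓ Z Uset N M x ≠ ⊤) (hj : j < N) :
    min (C / (1 - ρ) * ε) (costToGo f κ ℓ N M x u j) ≤
      C / (1 - ρ) * ℓ (traj f x u j) (u j) := by
  have hγ := hA2.gain_pos
  have hmin := lmin_le hℓ0 (traj f x u j) (hu.1 j hj).1
  by_cases hεj : lmin ℓ Uset (traj f x u j) ≤ ε
  · calc _ ≤ costToGo f κ ℓ N M x u j := min_le_right _ _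
      _ ≤ C / (1 - ρ) * lmin ℓ Uset (traj f x u j) :=
        costToGo_le_of_isMinimizer hℓ0 hκU hA2 hu hfin hj.le hεj
      _ ≤ C / (1 - ρ) * ℓ (traj f x u j) (u j) := by gcongr
  · calc _ ≤ C / (1 - ρ) * ε := min_le_left _ _
      _ ≤ C / (1 - ρ) * ℓ (traj f x u j) (u j) := by gcongr; linarith

lemma closedLoopCost_le_of_isMinimizer (hℓ0 : ∀ x u, 0 ≤ ℓ x u) (hκU : ∀ x, κ x ∈ Uset)
    (hA2 : Assumption2 f κ ℓ Z Uset ρ C ε) {γ Vbar : ℝ} {N₀ N M : ℕ} (hγ : γ = C / (1 - ρ))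
    (hγ1 : 1 < γ) (hVbar : 0 ≤ Vbar) (hV : Vbar ≤ (N₀ + γ) * ε) (hN : N₀ < N) {x : Vec n}
    {u : ℕ → Vec m} (hu : IsMinimizer f κ ℓ Z Uset N M x u)
    (hx : Vmpc f κ ℓ Z Uset N M x ≤ ENNReal.ofReal Vbar) :
    closedLoopCost f κ ℓ M (traj f x u N) ≤ ((γ - 1) / γ) ^ (N - N₀) * min (γ * ε) Vbar ∧
      closedLoopCost f κ ℓ M (traj f x u N) ≤ ((γ - 1) / γ) ^ (N - N₀) * (γ * ℓ x (u 0)) := by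
  subst hγ
  have hfin : Vmpc f κ ℓ Z Uset N M x ≠ ⊤ := ne_top_of_le_ne_top ENNReal.ofReal_ne_top hx
  have hR : costToGo f κ ℓ N M x u 0 ≤ Vbar := by
    rwa [Vmpc_eq_costToGo_of_isMinimizer hℓ0 hu hfin,
      ENNReal.ofReal_le_ofReal_iff hVbar] at hx
  have hchain := le_pow_mul_min_of_min_le_sub hγ1 hA2.2.2.1 hV hN.le hR
    (fun j _ => costToGo_nonneg hℓ0 N M x u j) fun j hj => by
      rw [costToGo_succ hj M, add_sub_cancel_right, ← costToGo_succ hj M]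
      exact min_le_mul_stageCost_of_isMinimizer hℓ0 hκU hA2 hu hfin hj
  rw [costToGo_self] at hchain
  have hρ : 0 ≤ ((C / (1 - ρ) - 1) / (C / (1 - ρ))) ^ (N - N₀) :=
    pow_nonneg (div_nonneg (by linarith) (by linarith)) _
  refine ⟨hchain.trans (by gcongr), hchain.trans ?_⟩
  gcongr
  exact min_le_mul_stageCost_of_isMinimizer hℓ0 hκU hA2 hu hfin (j := 0) (by omega)

lemma stageCost_phiX_le_of_isMinimizer (hℓ0 : ∀ x u, 0 ≤ ℓ x u) (hκU : ∀ x, κ x ∈ Uset)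
    (hA2 : Assumption2 f κ ℓ Z Uset ρ C ε) {γ Vbar εNM : ℝ} {N₀ N M : ℕ}
    (hγ : γ = C / (1 - ρ)) (hγ1 : 1 < γ) (hVbar : 0 ≤ Vbar) (hV : Vbar ≤ (N₀ + γ) * ε)
    (hN : N₀ < N) (hc : ((γ - 1) / γ) ^ (N - N₀) * min (γ * ε) Vbar < ε) (hM : 1 ≤ M)
    (hεNM : εNM = 1 - C ^ 2 * ((γ - 1) / γ) ^ (N - N₀) * ρ ^ M / (1 - ρ ^ M)) {x : Vec n}
    {u : ℕ → Vec m} (hu : IsMinimizer f κ ℓ Z Uset N M x u)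
    (hx : Vmpc f κ ℓ Z Uset N M x ≤ ENNReal.ofReal Vbar) :
    lmin ℓ Uset (traj f x u N) ≤ ε ∧
      ℓ (phiX f κ (traj f x u N) M) (κ (phiX f κ (traj f x u N) M)) ≤ (1 - εNM) * ℓ x (u 0) := by
  obtain ⟨hWV, hWℓ⟩ := closedLoopCost_le_of_isMinimizer hℓ0 hκU hA2 hγ hγ1 hVbar hV hN hu hx
  set y := traj f x u N
  set c := ((γ - 1) / γ) ^ (N - N₀)
  have hWε : closedLoopCost f κ ℓ M y ≤ ε := hWV.trans hc.le
  have hy : ℓ y (κ y) ≤ closedLoopCost f κ ℓ M y :=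
    Finset.single_le_sum (f := fun i => ℓ (phiX f κ y i) (κ (phiX f κ y i)))
      (fun _ _ => hℓ0 _ _) (Finset.mem_range.mpr hM)
  refine ⟨(lmin_le hℓ0 y (hκU y)).trans (hy.trans hWε), ?_⟩
  have hE := stageCost_phiX_mul_le hℓ0 hκU hA2 hWε
  obtain ⟨⟨hρ0, hρ1⟩, hC, -, -⟩ := hA2
  have : 0 ≤ C := by linarith
  have hρM : 0 < 1 - ρ ^ M := by linarith [pow_lt_one₀ hρ0 hρ1 (by omega : M ≠ 0)]
  have hγρ : γ * (1 - ρ) = C := by rw [hγ]; field_simp [(by linarith : (1 - ρ) ≠ 0)]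
  refine le_of_mul_le_mul_right (hE.trans ?_) hρM
  calc C * ρ ^ M * (1 - ρ) * closedLoopCost f κ ℓ M y
      ≤ C * ρ ^ M * (1 - ρ) * (c * (γ * ℓ x (u 0))) := by
        have : 0 ≤ 1 - ρ := by linarith
        gcongr
    _ = (1 - εNM) * ℓ x (u 0) * (1 - ρ ^ M) := by
        rw [hεNM]; field_simp; rw [← hγρ]; ring

lemma Vmpc_add_le_of_isMinimizer (hℓ0 : ∀ x u, 0 ≤ ℓ x u) (hκU : ∀ x, κ x ∈ Uset)
    (hA2 : Assumption2 f κ ℓ Z Uset ρ C ε) {γ Vbar εNM : ℝ} {N₀ N M : ℕ}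
    (hγ : γ = C / (1 - ρ)) (hγ1 : 1 < γ) (hVbar : 0 ≤ Vbar) (hV : Vbar ≤ (N₀ + γ) * ε)
    (hN : N₀ < N) (hc : ((γ - 1) / γ) ^ (N - N₀) * min (γ * ε) Vbar < ε) (hM : 1 ≤ M)
    (hεNM : εNM = 1 - C ^ 2 * ((γ - 1) / γ) ^ (N - N₀) * ρ ^ M / (1 - ρ ^ M)) (hεNM0 : 0 ≤ εNM)
    {x : Vec n} {u : ℕ → Vec m} (hu : IsMinimizer f κ ℓ Z Uset N M x u)
    (hx : Vmpc f κ ℓ Z Uset N M x ≤ ENNReal.ofReal Vbar) :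
    Vmpc f κ ℓ Z Uset N M (f x (u 0)) + ENNReal.ofReal (εNM * ℓ x (u 0)) ≤
      Vmpc f κ ℓ Z Uset N M x := by
  obtain ⟨hy, hE⟩ :=
    stageCost_phiX_le_of_isMinimizer hℓ0 hκU hA2 hγ hγ1 hVbar hV hN hc hM hεNM hu hx
  have hsucc := Vmpc_succ_le (M := M) hℓ0 hκU hA2 (by omega) hu.1 hy
  have hVx : Vmpc f κ ℓ Z Uset N M x = ENNReal.ofReal
      (openLoopCost f ℓ N x u + closedLoopCost f κ ℓ M (traj f x u N)) := by
    rw [Vmpc_eq_costToGo_of_isMinimizer hℓ0 hu (ne_top_of_le_ne_top ENNReal.ofReal_ne_top hx),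
      ← openLoopCost_add_costToGo le_rfl, costToGo_self]
  rw [closedLoopCost, Finset.sum_range_succ, ← closedLoopCost] at hsucc
  have hℓN : ℓ x (u 0) ≤ openLoopCost f ℓ N x u :=
    Finset.single_le_sum (f := fun k => ℓ (traj f x u k) (u k)) (a := 0) (fun _ _ => hℓ0 _ _)
      (Finset.mem_range.mpr (by omega))
  have hW0 := closedLoopCost_nonneg (f := f) (κ := κ) hℓ0 M (traj f x u N)
  have hE0 := hℓ0 (phiX f κ (traj f x u N) M) (κ (phiX f κ (traj f x u N) M))
  calc _ ≤ ENNReal.ofReal (openLoopCost f ℓ N x u + closedLoopCost f κ ℓ M (traj f x u N) -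
          εNM * ℓ x (u 0)) + ENNReal.ofReal (εNM * ℓ x (u 0)) := by
        gcongr
        exact hsucc.trans (ENNReal.ofReal_le_ofReal (by linarith))
    _ = Vmpc f κ ℓ Z Uset N M x := by
        rw [← ENNReal.ofReal_add (by linarith) (mul_nonneg hεNM0 (hℓ0 _ _)), sub_add_cancel, hVx]

lemma tsum_closedLoop_le (hℓ0 : ∀ x u, 0 ≤ ℓ x u) (hκU : ∀ x, κ x ∈ Uset)
    (hA2 : Assumption2 f κ ℓ Z Uset ρ C ε) {γ Vbar εNM : ℝ} {N₀ N M : ℕ}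
    (hγ : γ = C / (1 - ρ)) (hγ1 : 1 < γ) (hVbar : 0 ≤ Vbar) (hV : Vbar ≤ (N₀ + γ) * ε)
    (hN : N₀ < N) (hc : ((γ - 1) / γ) ^ (N - N₀) * min (γ * ε) Vbar < ε) (hM : 1 ≤ M)
    (hεNM : εNM = 1 - C ^ 2 * ((γ - 1) / γ) ^ (N - N₀) * ρ ^ M / (1 - ρ ^ M)) (hεNM0 : 0 ≤ εNM)
    {xcl : ℕ → Vec n} {ustar : ℕ → ℕ → Vec m}
    (hopt : ∀ t, IsMinimizer f κ ℓ Z Uset N M (xcl t) (ustar t))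
    (hstep : ∀ t, xcl (t + 1) = f (xcl t) (ustar t 0))
    (hx₀ : Vmpc f κ ℓ Z Uset N M (xcl 0) ≤ ENNReal.ofReal Vbar) :
    ENNReal.ofReal εNM * ∑' k, ENNReal.ofReal (ℓ (xcl k) (ustar k 0)) ≤
      Vmpc f κ ℓ Z Uset N M (xcl 0) := by
  have hdecrease := fun t (hx : Vmpc f κ ℓ Z Uset N M (xcl t) ≤ ENNReal.ofReal Vbar) =>
    hstep t ▸ Vmpc_add_le_of_isMinimizer hℓ0 hκU hA2 hγ hγ1 hVbar hV hN hc hM hεNM hεNM0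
      (hopt t) hx
  have hbounded : ∀ t, Vmpc f κ ℓ Z Uset N M (xcl t) ≤ ENNReal.ofReal Vbar := by
    intro t
    induction t with
    | zero => exact hx₀
    | succ t ih => exact le_self_add.trans ((hdecrease t ih).trans ih)
  rw [← ENNReal.tsum_mul_left]
  simp_rw [← ENNReal.ofReal_mul hεNM0]
  exact tsum_le_of_succ_add_le fun t => hdecrease t (hbounded t)

lemma Vmpc_le_mul_Vinf (hℓ0 : ∀ x u, 0 ≤ ℓ x u) (hκU : ∀ x, κ x ∈ Uset)
    (hA2 : Assumption2 f κ ℓ Z Uset ρ C ε) {γ Vbar : ℝ} {N₀ N M : ℕ}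
    (hγ : γ = C / (1 - ρ)) (hγ1 : 1 < γ) (hV : Vbar ≤ (N₀ + γ) * ε) (hN : N₀ ≤ N)
    (hc : ((γ - 1) / γ) ^ (N - N₀) * min (γ * ε) Vbar < ε) {x : Vec n}
    (hx : Vmpc f κ ℓ Z Uset N M x ≤ ENNReal.ofReal Vbar) :
    Vmpc f κ ℓ Z Uset N M x ≤
      ENNReal.ofReal (1 + γ * ((γ - 1) / γ) ^ (N - N₀)) * Vinf f ℓ Z Uset x := by
  set c := ((γ - 1) / γ) ^ (N - N₀)
  have hfac : 1 ≤ 1 + γ * c := le_add_of_nonneg_right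
    (mul_nonneg (by linarith) (pow_nonneg (div_nonneg (by linarith) (by linarith)) _))
  have hfac0 : ENNReal.ofReal (1 + γ * c) ≠ 0 := (ENNReal.ofReal_pos.mpr (by linarith)).ne'
  rw [Vinf, ENNReal.mul_iInf_of_ne hfac0 ENNReal.ofReal_ne_top]
  refine le_iInf fun u => ?_
  rw [ENNReal.mul_iInf_of_ne hfac0 ENNReal.ofReal_ne_top]
  refine le_iInf fun hu => ?_
  set g : ℕ → ℝ := fun k => ℓ (traj f x u k) (u k)
  have hg : ∀ k, 0 ≤ g k := fun k => hℓ0 _ _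
  rcases le_or_gt (ENNReal.ofReal Vbar) (∑' k, ENNReal.ofReal (g k)) with hlarge | hsmall
  · calc Vmpc f κ ℓ Z Uset N M x ≤ ∑' k, ENNReal.ofReal (g k) := hx.trans hlarge
      _ ≤ _ := le_mul_of_one_le_left (zero_le) (ENNReal.one_le_ofReal.mpr hfac)
  have hs : Summable g := by
    simpa [g, ENNReal.toReal_ofReal (hg _)] using
      ENNReal.summable_toReal (hsmall.trans ENNReal.ofReal_lt_top).ne
  rw [← ENNReal.ofReal_tsum_of_nonneg hg hs] at hsmall ⊢
  have hS := (ENNReal.ofReal_lt_ofReal_iff_of_nonneg (tsum_nonneg hg)).mp hsmall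
  obtain ⟨j, hjN, hgj, hj⟩ := exists_switch_time hγ1 hA2.2.2.1 hV hN hc hg hs hS.le
  have hεj : lmin ℓ Uset (traj f x u j) ≤ ε := (lmin_le hℓ0 _ (hu j).1).trans hgj
  calc Vmpc f κ ℓ Z Uset N M x ≤ ENNReal.ofReal
        (openLoopCost f ℓ j x u + C / (1 - ρ) * lmin ℓ Uset (traj f x u j)) :=
        Vmpc_le_openLoopCost_add hℓ0 hκU hA2 hjN (fun k _ => hu k) hεj
    _ ≤ ENNReal.ofReal ((1 + γ * c) * ∑' k, g k) := by
        refine ENNReal.ofReal_le_ofReal (le_trans ?_ hj)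
        rw [← hγ, openLoopCost]
        gcongr
        exact lmin_le hℓ0 _ (hu j).1
    _ = _ := ENNReal.ofReal_mul (by linarith)

end MPC

theorem closed_loop_suboptimality_general {n m : ℕ}
    (f : Vec n → Vec m → Vec n) (κ : Vec n → Vec m) (ℓ : Vec n → Vec m → ℝ)
    (Z : Set (Vec n × Vec m)) (Uset : Set (Vec m)) (ρ C ε : ℝ)
    (hℓ0 : ∀ x u, 0 ≤ ℓ x u)
    (hκU : ∀ x, κ x ∈ Uset)
    (hA2 : Assumption2 f κ ℓ Z Uset ρ C ε)
    (Vbar γ ργ γlow NM : ℝ) (hVbar : 0 < Vbar) (hγ : γ = C / (1 - ρ)) (hγ1 : 1 < γ)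
    (hργ : ργ = (γ - 1) / γ) (hγlow : γlow = min γ (Vbar / ε))
    (N₀ : ℕ) (hN₀ : N₀ = ⌈max 0 ((Vbar - γ * ε) / ε)⌉₊)
    (M : ℕ) (hM : 1 ≤ M)
    (hNM : NM = N₀ + max (Real.log γlow)
        (max (Real.log (C ^ 2 * ρ ^ M / (1 - ρ ^ M))) 0) /
        (Real.log γ - Real.log (γ - 1)))
    (N : ℕ) (hN : NM < N) (εNM αNM : ℝ)
    (hεNM : εNM = 1 - C ^ 2 * ργ ^ (N - N₀) * ρ ^ M / (1 - ρ ^ M))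
    (hαNM : αNM = εNM / (1 + γ * ργ ^ (N - N₀)))
    (x₀ : Vec n) (hx₀ : Vmpc f κ ℓ Z Uset N M x₀ ≤ ENNReal.ofReal Vbar)
    (xcl : ℕ → Vec n) (ustar : ℕ → ℕ → Vec m) (hinit : xcl 0 = x₀)
    (hopt : ∀ t, IsMinimizer f κ ℓ Z Uset N M (xcl t) (ustar t))
    (hstep : ∀ t, xcl (t + 1) = f (xcl t) (ustar t 0)) :
    Vmpc f κ ℓ Z Uset N M x₀ ≤
      ENNReal.ofReal (1 + γ * ργ ^ (N - N₀)) * Vinf f ℓ Z Uset x₀ ∧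
    αNM ∈ Set.Ioc (0 : ℝ) εNM ∧
    ∑' k : ℕ, ENNReal.ofReal (ℓ (xcl k) (ustar k 0)) ≤
      Vinf f ℓ Z Uset x₀ / ENNReal.ofReal αNM := by
  obtain ⟨hN₀N, hV, hc, hεNM0⟩ := horizon_bounds hA2.2.2.1 hγ1 hγlow hN₀ hNM hN
  subst hργ hinit
  rw [← hεNM] at hεNM0
  have hfac : 1 ≤ 1 + γ * ((γ - 1) / γ) ^ (N - N₀) := le_add_of_nonneg_right
    (mul_nonneg (by linarith) (pow_nonneg (div_nonneg (by linarith) (by linarith)) _))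
  have hVinf := Vmpc_le_mul_Vinf hℓ0 hκU hA2 hγ hγ1 hV hN₀N.le hc hx₀
  have hcl := tsum_closedLoop_le hℓ0 hκU hA2 hγ hγ1 hVbar.le hV hN₀N hc hM hεNM hεNM0.le
    hopt hstep hx₀
  rw [hαNM]
  exact ⟨hVinf, ⟨div_pos hεNM0 (by linarith), div_le_self hεNM0.le hfac⟩,
    le_div_ofReal_div hεNM0 (by linarith) hcl hVinf⟩

/-- Theorem 1, suboptimality w.r.t. the infinite horizon: under
Assumptions 1 and 2 with `ρ > 0`, `γ = C/(1-ρ) > 1` and `N > N_M`, every `x₀` with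
`V_{N,M}(x₀) ≤ V̄` satisfies `V_{N,M}(x₀) ≤ (1 + γ ρ_γ^(N-N₀)) V_{∞,0}(x₀)`;
combined with the closed-loop performance bound,
`Σ_{k=0}^∞ ℓ(x(k),u(k)) ≤ V_{∞,0}(x₀)/α_{N,M}` with
`α_{N,M} = ε_{N,M}/(1 + γ ρ_γ^(N-N₀)) ∈ (0, ε_{N,M}]`. -/
theorem closed_loop_suboptimality {n m : ℕ}
    (f : Vec n → Vec m → Vec n) (κ : Vec n → Vec m) (ℓ : Vec n → Vec m → ℝ)
    (Z : Set (Vec n × Vec m)) (Uset : Set (Vec m)) (ρ C ε : ℝ)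
    (hf : Continuous fun p : Vec n × Vec m => f p.1 p.2) (hf0 : f 0 0 = 0)
    (hℓ : Continuous fun p : Vec n × Vec m => ℓ p.1 p.2) (hℓ0 : ∀ x u, 0 ≤ ℓ x u)
    (hZ0 : ((0 : Vec n), (0 : Vec m)) ∈ interior Z) (hU : IsCompact Uset)
    (hκ : Continuous κ) (hκU : ∀ x, κ x ∈ Uset)
    (αlow αup : ℝ → ℝ) (hαlow : IsKInfty αlow) (hαup : IsKInfty αup)
    (hA1 : ∀ x : Vec n, αlow ‖x‖ ≤ lmin ℓ Uset x ∧ lmin ℓ Uset x ≤ αup ‖x‖)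
    (hℓ00 : ℓ 0 0 = 0)
    (hA2 : Assumption2 f κ ℓ Z Uset ρ C ε) (hρpos : 0 < ρ)
    (Vbar γ ργ γlow NM : ℝ) (hVbar : 0 < Vbar) (hγ : γ = C / (1 - ρ)) (hγ1 : 1 < γ)
    (hργ : ργ = (γ - 1) / γ) (hγlow : γlow = min γ (Vbar / ε))
    (N₀ : ℕ) (hN₀ : N₀ = ⌈max 0 ((Vbar - γ * ε) / ε)⌉₊)
    (M : ℕ) (hM : 1 ≤ M)
    (hNM : NM = N₀ + max (Real.log γlow)
        (max (Real.log (C ^ 2 * ρ ^ M / (1 - ρ ^ M))) 0) /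
        (Real.log γ - Real.log (γ - 1)))
    (N : ℕ) (hN : NM < N) (εNM αNM : ℝ)
    (hεNM : εNM = 1 - C ^ 2 * ργ ^ (N - N₀) * ρ ^ M / (1 - ρ ^ M))
    (hαNM : αNM = εNM / (1 + γ * ργ ^ (N - N₀)))
    (x₀ : Vec n) (hx₀ : Vmpc f κ ℓ Z Uset N M x₀ ≤ ENNReal.ofReal Vbar)
    (xcl : ℕ → Vec n) (ustar : ℕ → ℕ → Vec m) (hinit : xcl 0 = x₀)
    (hopt : ∀ t, IsMinimizer f κ ℓ Z Uset N M (xcl t) (ustar t))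
    (hstep : ∀ t, xcl (t + 1) = f (xcl t) (ustar t 0)) :
    Vmpc f κ ℓ Z Uset N M x₀ ≤
      ENNReal.ofReal (1 + γ * ργ ^ (N - N₀)) * Vinf f ℓ Z Uset x₀ ∧
    αNM ∈ Set.Ioc (0 : ℝ) εNM ∧
    ∑' k : ℕ, ENNReal.ofReal (ℓ (xcl k) (ustar k 0)) ≤
      Vinf f ℓ Z Uset x₀ / ENNReal.ofReal αNM :=
  closed_loop_suboptimality_general f κ ℓ Z Uset ρ C ε hℓ0 hκU hA2 Vbar γ ργ γlow NM hVbar hγ hγ1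
    hργ hγlow N₀ hN₀ M hM hNM N hN εNM αNM hεNM hαNM x₀ hx₀ xcl ustar hinit hopt hstep
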